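/- arXiv:1701.03411 — 2 statements merged into one kernel-verified Lean document; each statement's English description precedes it below -/
import Mathlib

section
/- Suppose F(x) and G(x) are formal power series over ℚ with constant term 1 satisfying G(x)/F(x) = ∏_{n ≥ 0} F(x^{p^n})^{a p^{bn}} for integers a, b and a prime p. Writing log F(x) = ∑ f^n x^n/n and log G(x) = ∑ g^n x^n/n, one has g^n = f^n + a ∑_{k=0}^{ν_p(n)} p^{k(b+1)} f^{n/p^k} for all n ≥ 1. -/
open PowerSeries

/-- The formal logarithm `log f = ∑ₖ (-1)^(k+1) (f-1)^k / k` of a power series `f` (with constant term `1`). -/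
noncomputable def logPS (f : PowerSeries ℚ) : PowerSeries ℚ :=
  PowerSeries.mk fun n =>
    ∑ k ∈ Finset.range (n + 1), (-1 : ℚ) ^ (k + 1) * (PowerSeries.coeff n ((f - 1) ^ k)) / k

/-- The series `∑_{n ≥ 1} a n * x^n / n`. -/
noncomputable def serA (a : ℕ → ℚ) : PowerSeries ℚ :=
  PowerSeries.mk fun n => if n = 0 then 0 else a n / n

/-- The `(x)`-adic limit of the partial products `∏_{n ≤ N} f n`: this is the infinite product `∏_{n ≥ 0} f n` whenever the factor `f n` is `≡ 1 mod x^n`. -/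
noncomputable def prodPS (f : ℕ → PowerSeries ℚ) : PowerSeries ℚ :=
  PowerSeries.mk fun N => PowerSeries.coeff N (∏ n ∈ Finset.range (N + 1), f n)

/-- Integer powers of a formal power series (negative powers use the formal inverse available over the field `ℚ`). -/
noncomputable def zpowPS (f : PowerSeries ℚ) (m : ℤ) : PowerSeries ℚ :=
  if 0 ≤ m then f ^ m.toNat else (f⁻¹) ^ (-m).toNat

/-- The substitution `x ↦ x^p` in a formal power series. -/
noncomputable def powSubst (f : PowerSeries ℚ) (p : ℕ) : PowerSeries ℚ :=
  PowerSeries.mk fun n => if p ∣ n then PowerSeries.coeff (n / p) f else 0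

/-! The formal logarithm turns the product into a sum,
`log G = log F + ∑ₖ e(k) log F(x^(p^k))`, the `(x)`-adic convergence letting us truncate the
product at `k ≤ n` when reading off the coefficient of `x^n`. Since `log` commutes with
`x ↦ x^q`, which sends `∑ f(m) x^m/m` to `∑ q f(m) x^(qm)/(qm)`, the `k`-th term contributes
`e(k) p^k f(n/p^k)` to `n · [x^n]` exactly when `p^k ∣ n`, i.e. when `k ≤ ν_p(n)`.

Multiplicativity of `log` comes from identifying `logPS` with
`PowerSeries.logOf f = log(1 + X) ∘ (f - 1)`, whose logarithmic derivative is `f' / f`. -/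

open Finset

namespace PowerSeries

theorem hasSubst_sub_one {R : Type*} [CommRing R] {f : R⟦X⟧} (hf : constantCoeff f = 1) :
    HasSubst (f - 1) :=
  HasSubst.of_constantCoeff_zero' (by simp [hf])

theorem coeff_pow_eq_zero_of_lt {R : Type*} [CommSemiring R] {u : R⟦X⟧}
    (hu : constantCoeff u = 0) {n k : ℕ} (h : n < k) : coeff n (u ^ k) = 0 :=
  coeff_of_lt_order n ((Nat.cast_lt.mpr h).trans_le (le_order_pow_of_constantCoeff_eq_zero k hu))

section LogOf

variable {A : Type*} [CommRing A] [Algebra ℚ A]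

theorem derivative_log_mul_one_add_X : d⁄dX A (log A) * (1 + X) = 1 := by
  ext n
  rcases n with _ | n
  · simp [deriv_log]
  · rw [mul_add, mul_one, map_add, coeff_succ_mul_X, deriv_log, coeff_mk, coeff_mk, coeff_one]
    simp [pow_succ]

theorem subst_derivative_log_mul {f : A⟦X⟧} (hf : constantCoeff f = 1) :
    (d⁄dX A (log A)).subst (f - 1) * f = 1 := by
  have h := congrArg (substAlgHom (hasSubst_sub_one hf)) (derivative_log_mul_one_add_X (A := A))
  rwa [map_mul, map_add, map_one, substAlgHom_X, coe_substAlgHom, add_sub_cancel] at h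

theorem mul_derivative_logOf {f : A⟦X⟧} (hf : constantCoeff f = 1) :
    f * d⁄dX A (logOf f) = d⁄dX A f := by
  rw [logOf_eq, derivative_subst (hasSubst_sub_one hf), ← mul_assoc, mul_comm f,
    subst_derivative_log_mul hf, one_mul, map_sub, derivative_one, sub_zero]

theorem logOf_mul {f g : A⟦X⟧} (hf : constantCoeff f = 1) (hg : constantCoeff g = 1) :
    logOf (f * g) = logOf f + logOf g := by
  have : IsAddTorsionFree A := IsAddTorsionFree.of_module_rat A
  have hfg : constantCoeff (f * g) = 1 := by simp [hf, hg]
  apply derivative.ext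
  · refine (isUnit_iff_constantCoeff.mpr (hfg ▸ isUnit_one)).mul_left_cancel ?_
    calc f * g * d⁄dX A (logOf (f * g))
        = g * (f * d⁄dX A (logOf f)) + f * (g * d⁄dX A (logOf g)) := by
          rw [mul_derivative_logOf hfg, mul_derivative_logOf hf, mul_derivative_logOf hg,
            Derivation.leibniz, smul_eq_mul, smul_eq_mul, add_comm]
      _ = f * g * d⁄dX A (logOf f + logOf g) := by rw [map_add]; ring
  · rw [map_add, constantCoeff_logOf hfg, constantCoeff_logOf hf, constantCoeff_logOf hg, add_zero]

theorem logOf_expand {q : ℕ} (hq : q ≠ 0) {f : A⟦X⟧} (hf : constantCoeff f = 1) :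
    logOf (expand q hq f) = expand q hq (logOf f) := by
  have h := expand_subst q hq (hasSubst_sub_one hf) (log A)
  rw [logOf_eq, logOf_eq]
  exact (h.trans (by rw [map_sub, map_one]; rfl)).symm

end LogOf

theorem X_pow_dvd_expand_sub_one {R : Type*} [CommRing R] {f : R⟦X⟧} (hf : constantCoeff f = 1)
    {q : ℕ} (hq : q ≠ 0) : X ^ q ∣ expand q hq f - 1 := by
  obtain ⟨u, hu⟩ := X_dvd_iff.mpr (show constantCoeff (f - 1) = 0 by simp [hf])
  have := congrArg (expand q hq) hu
  rw [map_sub, map_one, map_mul, expand_X] at this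
  exact ⟨_, this⟩

theorem X_pow_dvd_prod_range_sub_prod_range {R : Type*} [CommRing R] {h : ℕ → R⟦X⟧}
    (hh : ∀ k, X ^ k ∣ h k - 1) {M N : ℕ} (hMN : M ≤ N) :
    X ^ (M + 1) ∣ ∏ k ∈ range (N + 1), h k - ∏ k ∈ range (M + 1), h k := by
  rw [← prod_range_mul_prod_Ico h (by omega : M + 1 ≤ N + 1), ← mul_sub_one]
  refine dvd_mul_of_dvd_right ?_ _
  simp_rw [← Ideal.mem_span_singleton, ← Ideal.Quotient.eq, map_prod, map_one]
  refine prod_eq_one fun k hk => ?_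
  rw [← map_one (Ideal.Quotient.mk _), Ideal.Quotient.eq, Ideal.mem_span_singleton]
  exact (pow_dvd_pow X (mem_Ico.1 hk).1).trans (hh k)

end PowerSeries

open PowerSeries

theorem coeff_serA (a : ℕ → ℚ) {n : ℕ} (hn : n ≠ 0) : coeff n (serA a) = a n / n := by
  simp [serA, hn]

theorem expand_serA (a : ℕ → ℚ) {q : ℕ} (hq : q ≠ 0) :
    expand q hq (serA a) = serA fun n => if q ∣ n then q * a (n / q) else 0 := by
  ext n
  rcases eq_or_ne n 0 with rfl | hn
  · simp [serA]
  rw [coeff_expand, coeff_serA _ hn]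
  split_ifs with hd
  · obtain ⟨m, rfl⟩ := hd
    have hm : m ≠ 0 := by rintro rfl; simp at hn
    rw [Nat.mul_div_cancel_left m (Nat.pos_of_ne_zero hq), coeff_serA _ hm]
    push_cast
    field_simp
  · simp

theorem powSubst_eq_expand (f : ℚ⟦X⟧) {q : ℕ} (hq : q ≠ 0) : powSubst f q = expand q hq f := by
  ext n
  simp [powSubst, coeff_expand]

theorem constantCoeff_powSubst (f : ℚ⟦X⟧) (q : ℕ) :
    constantCoeff (powSubst f q) = constantCoeff f := by
  rw [← coeff_zero_eq_constantCoeff_apply, ← coeff_zero_eq_constantCoeff_apply, powSubst,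
    coeff_mk, if_pos (dvd_zero q), Nat.zero_div]

theorem constantCoeff_zpowPS {f : ℚ⟦X⟧} (hf : constantCoeff f = 1) (m : ℤ) :
    constantCoeff (zpowPS f m) = 1 := by
  unfold zpowPS
  split_ifs <;> simp [hf]

theorem logPS_eq_logOf {f : ℚ⟦X⟧} (hf : constantCoeff f = 1) : logPS f = logOf f := by
  ext n
  rw [logOf_eq, coeff_subst' (hasSubst_sub_one hf),
    finsum_eq_finsetSum_of_support_subset (s := range (n + 1)), logPS, coeff_mk]
  · refine sum_congr rfl fun k _ => ?_
    rcases k with _ | k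
    · simp -- the `k = 0` term of `logPS` vanishes through `x / 0 = 0`
    · simp [div_mul_eq_mul_div]
  · intro k hk
    by_contra hkn
    rw [mem_coe, mem_range, not_lt] at hkn
    have hf1 : constantCoeff (f - 1) = 0 := by simp [hf]
    exact hk (by simp only [coeff_pow_eq_zero_of_lt hf1 hkn, smul_zero])

theorem logPS_mul {f g : ℚ⟦X⟧} (hf : constantCoeff f = 1) (hg : constantCoeff g = 1) :
    logPS (f * g) = logPS f + logPS g := by
  rw [logPS_eq_logOf hf, logPS_eq_logOf hg, logPS_eq_logOf (by simp [hf, hg]), logOf_mul hf hg]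

theorem logPS_one : logPS 1 = 0 := by
  simpa using logPS_mul (f := 1) (g := 1) (by simp) (by simp)

theorem logPS_prod {s : Finset ℕ} {h : ℕ → ℚ⟦X⟧} (hh : ∀ k ∈ s, constantCoeff (h k) = 1) :
    logPS (∏ k ∈ s, h k) = ∑ k ∈ s, logPS (h k) := by
  induction s using Finset.cons_induction with
  | empty => simp [logPS_one]
  | cons i s _ ih =>
    rw [prod_cons, sum_cons, logPS_mul (hh i (mem_cons_self i s)) (by
        rw [map_prod]; exact prod_eq_one fun k hk => hh k (mem_cons_of_mem hk)),
      ih fun k hk => hh k (mem_cons_of_mem hk)]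

theorem logPS_pow {f : ℚ⟦X⟧} (hf : constantCoeff f = 1) (k : ℕ) :
    logPS (f ^ k) = (k : ℚ) • logPS f := by
  induction k with
  | zero => simp [logPS_one]
  | succ k ih =>
    rw [pow_succ, logPS_mul (by simp [hf]) hf, ih, Nat.cast_succ, add_smul, one_smul]

theorem logPS_inv {f : ℚ⟦X⟧} (hf : constantCoeff f = 1) : logPS f⁻¹ = -logPS f := by
  have h := logPS_mul hf (by simp [hf] : constantCoeff f⁻¹ = 1)
  rw [PowerSeries.mul_inv_cancel _ (by simp [hf]), logPS_one] at h
  exact eq_neg_of_add_eq_zero_right h.symm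

theorem logPS_zpowPS {f : ℚ⟦X⟧} (hf : constantCoeff f = 1) (m : ℤ) :
    logPS (zpowPS f m) = (m : ℚ) • logPS f := by
  unfold zpowPS
  split_ifs with hm
  · rw [logPS_pow hf, ← Int.cast_natCast, Int.toNat_of_nonneg hm]
  · rw [logPS_pow (by simp [hf]), logPS_inv hf, ← Int.cast_natCast,
      Int.toNat_of_nonneg (by omega), Int.cast_neg, smul_neg, neg_smul, neg_neg]

theorem logPS_powSubst {f : ℚ⟦X⟧} (hf : constantCoeff f = 1) {q : ℕ} (hq : q ≠ 0) :
    logPS (powSubst f q) = expand q hq (logPS f) := by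
  rw [powSubst_eq_expand f hq, logPS_eq_logOf hf, logPS_eq_logOf (by simp [hf]),
    logOf_expand hq hf]

theorem coeff_logPS_zpowPS_powSubst {f : ℚ⟦X⟧} (hf : constantCoeff f = 1) {a : ℕ → ℚ}
    (ha : logPS f = serA a) {q : ℕ} (hq : q ≠ 0) (m : ℤ) {n : ℕ} (hn : n ≠ 0) :
    coeff n (logPS (zpowPS (powSubst f q) m)) =
      (if q ∣ n then m * q * a (n / q) else 0) / n := by
  rw [logPS_zpowPS (by rw [constantCoeff_powSubst, hf]), logPS_powSubst hf hq, ha, expand_serA,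
    coeff_smul, coeff_serA _ hn, smul_eq_mul, mul_div_assoc', mul_ite, mul_zero, mul_assoc]

theorem coeff_logPS_eq_of_X_pow_dvd_sub {f g : ℚ⟦X⟧} {n : ℕ} (h : X ^ (n + 1) ∣ f - g) :
    coeff n (logPS f) = coeff n (logPS g) := by
  simp only [logPS, coeff_mk]
  refine sum_congr rfl fun k _ => ?_
  have hk : X ^ (n + 1) ∣ (f - 1) ^ k - (g - 1) ^ k :=
    h.trans (by simpa using sub_dvd_pow_sub_pow (f - 1) (g - 1) k)
  have hcoeff := X_pow_dvd_iff.mp hk n n.lt_succ_self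
  rw [map_sub, sub_eq_zero] at hcoeff
  rw [hcoeff]

theorem X_pow_dvd_prodPS_sub_prod {h : ℕ → ℚ⟦X⟧} (hh : ∀ k, X ^ k ∣ h k - 1) (N : ℕ) :
    X ^ (N + 1) ∣ prodPS h - ∏ k ∈ range (N + 1), h k := by
  rw [X_pow_dvd_iff]
  intro m hm
  rw [map_sub, prodPS, coeff_mk, sub_eq_zero, eq_comm, ← sub_eq_zero, ← map_sub]
  exact X_pow_dvd_iff.mp (X_pow_dvd_prod_range_sub_prod_range hh (by omega : m ≤ N)) m
    m.lt_succ_self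

theorem coeff_logPS_prodPS {h : ℕ → ℚ⟦X⟧} (hc : ∀ k, constantCoeff (h k) = 1)
    (hh : ∀ k, X ^ k ∣ h k - 1) (n : ℕ) :
    coeff n (logPS (prodPS h)) = ∑ k ∈ range (n + 1), coeff n (logPS (h k)) := by
  rw [coeff_logPS_eq_of_X_pow_dvd_sub (X_pow_dvd_prodPS_sub_prod hh n),
    logPS_prod fun k _ => hc k, map_sum]

theorem X_pow_dvd_zpowPS_sub_one {f : ℚ⟦X⟧} (hf : constantCoeff f ≠ 0) {N : ℕ}
    (hd : X ^ N ∣ f - 1) (m : ℤ) : X ^ N ∣ zpowPS f m - 1 := by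
  have hinv : X ^ N ∣ f⁻¹ - 1 := by
    have : f⁻¹ - 1 = -f⁻¹ * (f - 1) := by
      rw [neg_mul, mul_sub, PowerSeries.inv_mul_cancel _ hf]; ring
    rw [this]
    exact dvd_mul_of_dvd_right hd _
  unfold zpowPS
  split_ifs
  · exact hd.trans (sub_one_dvd_pow_sub_one _ _)
  · exact hinv.trans (sub_one_dvd_pow_sub_one _ _)

theorem X_pow_dvd_zpowPS_powSubst_pow_sub_one {f : ℚ⟦X⟧} (hf : constantCoeff f = 1) {q : ℕ}
    (hq : 1 < q) (k : ℕ) (m : ℤ) : X ^ k ∣ zpowPS (powSubst f (q ^ k)) m - 1 := by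
  have hqk : q ^ k ≠ 0 := pow_ne_zero k (by omega)
  refine (pow_dvd_pow X (Nat.lt_pow_self hq).le).trans (X_pow_dvd_zpowPS_sub_one ?_ ?_ m)
  · simp [constantCoeff_powSubst, hf]
  · exact powSubst_eq_expand f hqk ▸ X_pow_dvd_expand_sub_one hf hqk

theorem coeff_logPS_prodPS_zpowPS_powSubst {f : ℚ⟦X⟧} (hf : constantCoeff f = 1) {a : ℕ → ℚ}
    (ha : logPS f = serA a) {q : ℕ} (hq : 1 < q) (e : ℕ → ℤ) {n : ℕ} (hn : n ≠ 0) :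
    coeff n (logPS (prodPS fun k => zpowPS (powSubst f (q ^ k)) (e k))) =
      (∑ k ∈ range (n + 1), if q ^ k ∣ n then e k * (q ^ k : ℕ) * a (n / q ^ k) else 0) / n := by
  rw [coeff_logPS_prodPS (fun k => constantCoeff_zpowPS (by simp [constantCoeff_powSubst, hf]) _)
    (fun k => X_pow_dvd_zpowPS_powSubst_pow_sub_one hf hq k (e k)), sum_div]
  exact sum_congr rfl fun k _ =>
    coeff_logPS_zpowPS_powSubst hf ha (pow_ne_zero k (by omega)) (e k) hn

theorem sum_ite_pow_dvd_eq_sum_padicValNat {M : Type*} [AddCommMonoid M] {p n : ℕ}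
    (hp : p.Prime) (hn : n ≠ 0) (t : ℕ → M) :
    ∑ k ∈ range (n + 1), (if p ^ k ∣ n then t k else 0) =
      ∑ k ∈ range (padicValNat p n + 1), t k := by
  have := Fact.mk hp
  rw [← sum_filter]
  congr 1
  ext k
  simp only [mem_filter, mem_range, Nat.lt_succ_iff, ← padicValNat_dvd_iff_le hn]
  exact and_iff_right_of_imp fun hdvd =>
    (Nat.lt_pow_self hp.one_lt).le.trans (Nat.le_of_dvd (Nat.pos_of_ne_zero hn) hdvd)

/-- If `G/F = ∏_{n ≥ 0} F(x^(p^n))^(a p^(b n))` and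
`log F = ∑ f_n x^n/n`, `log G = ∑ g_n x^n/n`, then
`g_n = f_n + a ∑_{k=0}^{ν_p(n)} p^(k(b+1)) f_{n/p^k}`. -/
theorem stmt_15 (p : ℕ) (hp : p.Prime) (a b : ℤ) (F G : PowerSeries ℚ)
    (hF : PowerSeries.constantCoeff F = 1)
    (hG : PowerSeries.constantCoeff G = 1)
    (e : ℕ → ℤ) (he : ∀ n : ℕ, (e n : ℚ) = (a : ℚ) * (p : ℚ) ^ (b * (n : ℤ)))
    (hprod : G * F⁻¹ = prodPS fun n => zpowPS (powSubst F (p ^ n)) (e n))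
    (f g : ℕ → ℚ) (hf : logPS F = serA f) (hg : logPS G = serA g) :
    ∀ n : ℕ, 1 ≤ n →
      g n = f n + (a : ℚ) * ∑ k ∈ Finset.range (padicValNat p n + 1),
        (p : ℚ) ^ ((k : ℤ) * (b + 1)) * f (n / p ^ k) := by
  intro n hn
  have hn0 : n ≠ 0 := by omega
  have hlogG : logPS G = logPS F + logPS (prodPS fun k => zpowPS (powSubst F (p ^ k)) (e k)) := by
    rw [← hprod, logPS_mul hG (by simp [hF]), logPS_inv hF]
    abel
  have hcoeff := congrArg (coeff n) hlogG
  rw [map_add, coeff_logPS_prodPS_zpowPS_powSubst hF hf hp.one_lt e hn0, hf, hg, coeff_serA _ hn0,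
    coeff_serA _ hn0, ← add_div, div_left_inj' (by exact_mod_cast hn0)] at hcoeff
  rw [hcoeff, sum_ite_pow_dvd_eq_sum_padicValNat hp hn0, mul_sum]
  congr 1
  refine sum_congr rfl fun k _ => ?_
  have hexp : (p : ℚ) ^ (b * k) * p ^ k = p ^ ((k : ℤ) * (b + 1)) := by
    rw [← zpow_natCast, ← zpow_add₀ (by exact_mod_cast hp.ne_zero)]
    ring_nf
  rw [he k, ← hexp]
  push_cast
  ring
end

section
/- For a prime p and r ≥ 2, the series G_r^p(x) = exp(-∑_{n ≥ 1} (pn)_p^{r-1} x^n/n) satisfies G_r^p(x) = (1-x)^{p^{r-1}} ∏_{n ≥ 1} (1 - x^{p^n})^{p^{n(r-2)}(p^{r-1} - 1)} as formal power series over ℚ. -/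
open PowerSeries

/-- The formal exponential `exp f = ∑ₖ f^k / k!` of a power series `f` (with zero constant term). -/
noncomputable def expPS (f : PowerSeries ℚ) : PowerSeries ℚ :=
  PowerSeries.mk fun n =>
    ∑ k ∈ Finset.range (n + 1), (PowerSeries.coeff n (f ^ k)) / (Nat.factorial k)

/-- The series `G_r^p(x) = exp (-∑_{n ≥ 1} (p n)_p^(r-1) x^n / n)`,
where `(p n)_p = p^(1 + ν_p n)`. -/
noncomputable def Gser (p r : ℕ) : PowerSeries ℚ :=
  expPS (serA fun n => -((p : ℚ) ^ ((1 + padicValNat p n) * (r - 1))))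

/-!
Both sides have constant term `1` and the same logarithmic derivative `X f'/f`, namely
`-∑_{a ≥ 1} (pa)_p^(r-1) X^a`. For the exponential this is immediate. In the product, the factor
`(1 - X^(p^k))^c` contributes `-c p^k ∑_{j ≥ 1} X^(j p^k)`, so the coefficient of `X^a` comes
from the factors with `p^k ∣ a`, i.e. `k ≤ ν_p(a)`, and the exponents are chosen so that
`p^(r-1) + ∑_{1 ≤ k ≤ ν} p^(k(r-2)) (p^(r-1) - 1) p^k` telescopes to `p^((1+ν)(r-1))`. The infinite
product is handled through its partial products, which agree with it modulo `X^(M+1)`.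
Over `ℚ`, a series with constant term `1` is determined by its logarithmic derivative.
-/

namespace PowerSeries

variable {R : Type*} [CommRing R]

/-- `B = X f' / f`: the logarithmic derivative of `f` for the Euler operator `X d/dX`,
stated without division. -/
def HasLogDeriv (f B : R⟦X⟧) : Prop := X * d⁄dX R f = B * f

theorem HasLogDeriv.mul {f g B C : R⟦X⟧} (hf : HasLogDeriv f B) (hg : HasLogDeriv g C) :
    HasLogDeriv (f * g) (B + C) := by
  unfold HasLogDeriv at *
  rw [Derivation.leibniz, smul_eq_mul, smul_eq_mul]
  linear_combination f * hg + g * hf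

theorem HasLogDeriv.prod {ι : Type*} {s : Finset ι} {f B : ι → R⟦X⟧}
    (h : ∀ i ∈ s, HasLogDeriv (f i) (B i)) :
    HasLogDeriv (∏ i ∈ s, f i) (∑ i ∈ s, B i) := by
  classical
  induction s using Finset.induction_on with
  | empty => simp [HasLogDeriv]
  | insert a s ha ih =>
    rw [Finset.prod_insert ha, Finset.sum_insert ha]
    exact (h a (s.mem_insert_self a)).mul (ih fun i hi => h i (Finset.mem_insert_of_mem hi))

theorem HasLogDeriv.pow {f B : R⟦X⟧} (hf : HasLogDeriv f B) (c : ℕ) :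
    HasLogDeriv (f ^ c) (c • B) := by
  simpa using HasLogDeriv.prod (s := Finset.range c) fun _ _ => hf

theorem HasLogDeriv.sub {f g B : R⟦X⟧} (hf : HasLogDeriv f B) (hg : HasLogDeriv g B) :
    HasLogDeriv (f - g) B := by
  unfold HasLogDeriv at *
  rw [map_sub, mul_sub, mul_sub, hf, hg]

/-- The series `∑_{k ≥ 1} X^(m k)`. -/
def geomTail (m : ℕ) : R⟦X⟧ := mk fun a => if m ∣ a ∧ a ≠ 0 then 1 else 0

theorem coeff_geomTail (m a : ℕ) :
    coeff a (geomTail m : R⟦X⟧) = if m ∣ a ∧ a ≠ 0 then 1 else 0 :=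
  coeff_mk _ _

@[simp]
theorem constantCoeff_geomTail (m : ℕ) : constantCoeff (geomTail m : R⟦X⟧) = 0 := by
  simp [geomTail]

theorem geomTail_mul_one_sub_X_pow {m : ℕ} (hm : m ≠ 0) :
    geomTail m * (1 - X ^ m) = (X ^ m : R⟦X⟧) := by
  ext a
  rw [mul_sub, mul_one, mul_comm, map_sub, coeff_X_pow_mul', coeff_X_pow, coeff_geomTail]
  rcases lt_or_ge a m with ham | ham
  · have : ¬ (m ∣ a ∧ a ≠ 0) := fun h => (Nat.le_of_dvd (by omega) h.1).not_gt ham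
    simp [this, ham.not_ge, ham.ne]
  · obtain ⟨k, rfl⟩ := Nat.exists_eq_add_of_le ham
    rcases eq_or_ne k 0 with rfl | hk
    · simp [hm]
    · simp [hk, hm, coeff_geomTail]

theorem hasLogDeriv_one_sub_X_pow {m : ℕ} (hm : m ≠ 0) :
    HasLogDeriv (1 - X ^ m : R⟦X⟧) (-(m • geomTail m)) := by
  rw [HasLogDeriv, map_sub, Derivation.map_one_eq_zero, Derivation.leibniz_pow, derivative_X,
    smul_eq_mul, mul_one, neg_mul, smul_mul_assoc, geomTail_mul_one_sub_X_pow hm, zero_sub,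
    mul_neg, mul_smul_comm, ← pow_succ', Nat.sub_add_cancel (Nat.pos_of_ne_zero hm)]

theorem hasLogDeriv_one_sub_X_pow_pow {m : ℕ} (hm : m ≠ 0) (c : ℕ) :
    HasLogDeriv ((1 - X ^ m : R⟦X⟧) ^ c) (-((c * m) • geomTail m)) := by
  simpa [mul_smul] using (hasLogDeriv_one_sub_X_pow (R := R) hm).pow c

theorem coeff_X_mul_derivative (f : R⟦X⟧) (n : ℕ) :
    coeff n (X * d⁄dX R f) = n * coeff n f := by
  cases n with
  | zero => simp
  | succ n => rw [coeff_succ_X_mul, coeff_derivative, mul_comm, Nat.cast_succ]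

theorem X_pow_dvd_X_mul_derivative {f : R⟦X⟧} {n : ℕ} (h : X ^ n ∣ f) :
    X ^ n ∣ X * d⁄dX R f := by
  rw [X_pow_dvd_iff] at h ⊢
  intro m hm
  rw [coeff_X_mul_derivative, h m hm, mul_zero]

theorem HasLogDeriv.of_forall_X_pow_dvd {f B : R⟦X⟧}
    (h : ∀ M, ∃ g C, HasLogDeriv g C ∧ X ^ (M + 1) ∣ f - g ∧ X ^ (M + 1) ∣ B - C) :
    HasLogDeriv f B := by
  rw [HasLogDeriv, ← sub_eq_zero]
  ext M
  obtain ⟨g, C, hg, hfg, hBC⟩ := h M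
  have hdvd : X ^ (M + 1) ∣ X * d⁄dX R f - B * f := by
    have e : X * d⁄dX R f - B * f = X * d⁄dX R (f - g) - (B * (f - g) + (B - C) * g) := by
      rw [map_sub, mul_sub, show X * d⁄dX R g = C * g from hg]
      ring
    rw [e]
    exact dvd_sub (X_pow_dvd_X_mul_derivative hfg)
      (dvd_add (dvd_mul_of_dvd_right hfg _) (dvd_mul_of_dvd_left hBC _))
  simpa using X_pow_dvd_iff.mp hdvd M M.lt_succ_self

theorem HasLogDeriv.eq_zero [NoZeroDivisors R] [CharZero R] {f B : R⟦X⟧}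
    (hB : constantCoeff B = 0) (hf : HasLogDeriv f B) (hf0 : constantCoeff f = 0) : f = 0 := by
  suffices ∀ n, X ^ (n + 1) ∣ f by
    ext n
    simpa using X_pow_dvd_iff.mp (this n) n n.lt_succ_self
  intro n
  induction n with
  | zero => simpa [X_dvd_iff]
  | succ n ih =>
    obtain ⟨k, rfl⟩ := ih
    have hcoeff := congrArg (coeff (n + 1)) hf
    rw [coeff_X_mul_derivative, mul_left_comm, coeff_X_pow_mul', coeff_X_pow_mul', if_pos le_rfl,
      if_pos le_rfl, Nat.sub_self, coeff_zero_eq_constantCoeff, map_mul, hB, zero_mul,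
      mul_eq_zero] at hcoeff
    have hk : X ∣ k := X_dvd_iff.mpr (hcoeff.resolve_left (by exact_mod_cast n.succ_ne_zero))
    rw [pow_succ]
    exact mul_dvd_mul_left _ hk

theorem HasLogDeriv.eq_of_constantCoeff_eq [NoZeroDivisors R] [CharZero R] {f g B : R⟦X⟧}
    (hB : constantCoeff B = 0) (hf : HasLogDeriv f B) (hg : HasLogDeriv g B)
    (h0 : constantCoeff f = constantCoeff g) : f = g :=
  sub_eq_zero.mp <| (hf.sub hg).eq_zero hB (by rw [map_sub, h0, sub_self])

theorem X_pow_dvd_one_sub_X_pow_pow_sub_one (m c : ℕ) :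
    (X ^ m : R⟦X⟧) ∣ (1 - X ^ m) ^ c - 1 := by
  have h := sub_dvd_pow_sub_pow (1 - X ^ m : R⟦X⟧) 1 c
  rwa [one_pow, sub_sub_cancel_left, neg_dvd] at h

theorem X_pow_dvd_prod_range_sub_prod_range_s16 {f : ℕ → R⟦X⟧} (hf : ∀ n, X ^ n ∣ f n - 1)
    {a M : ℕ} (haM : a ≤ M) :
    X ^ (a + 1) ∣ ∏ n ∈ Finset.range (M + 1), f n - ∏ n ∈ Finset.range (a + 1), f n := by
  induction M, haM using Nat.le_induction with
  | base => simp
  | succ M haM ih =>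
    have e : ∏ n ∈ Finset.range (M + 1 + 1), f n - ∏ n ∈ Finset.range (a + 1), f n =
        (∏ n ∈ Finset.range (M + 1), f n) * (f (M + 1) - 1) +
          (∏ n ∈ Finset.range (M + 1), f n - ∏ n ∈ Finset.range (a + 1), f n) := by
      rw [Finset.prod_range_succ]
      ring
    rw [e]
    exact dvd_add (dvd_mul_of_dvd_right ((pow_dvd_pow X (by omega)).trans (hf (M + 1))) _) ih

end PowerSeries

theorem X_pow_dvd_prodPS_sub_prod_range {f : ℕ → ℚ⟦X⟧} (hf : ∀ n, X ^ n ∣ f n - 1) (M : ℕ) :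
    X ^ (M + 1) ∣ prodPS f - ∏ n ∈ Finset.range (M + 1), f n := by
  rw [X_pow_dvd_iff]
  intro a ha
  have h := X_pow_dvd_iff.mp (X_pow_dvd_prod_range_sub_prod_range_s16 hf (Nat.le_of_lt_succ ha)) a
    a.lt_succ_self
  rw [map_sub] at h ⊢
  rw [prodPS, coeff_mk]
  linear_combination -h

theorem constantCoeff_prodPS (f : ℕ → ℚ⟦X⟧) : constantCoeff (prodPS f) = constantCoeff (f 0) := by
  simp [prodPS, ← coeff_zero_eq_constantCoeff]

theorem constantCoeff_expPS (f : ℚ⟦X⟧) : constantCoeff (expPS f) = 1 := by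
  simp [expPS]

theorem expPS_eq_subst_exp {f : ℚ⟦X⟧} (hf : constantCoeff f = 0) :
    expPS f = (exp ℚ).subst f := by
  ext n
  rw [expPS, coeff_mk, coeff_subst' (HasSubst.of_constantCoeff_zero' hf),
    finsum_eq_sum_of_support_subset (s := Finset.range (n + 1))]
  · refine Finset.sum_congr rfl fun k _ => ?_
    rw [coeff_exp, smul_eq_mul]
    simp [div_eq_inv_mul]
  · intro k hk
    obtain ⟨g, rfl⟩ := X_dvd_iff.mpr hf
    rw [Function.mem_support, mul_pow, coeff_X_pow_mul'] at hk
    simp only [Finset.coe_range, Set.mem_Iio]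
    by_contra hkn
    exact hk (by rw [if_neg (by omega), smul_zero])

theorem hasLogDeriv_expPS {f : ℚ⟦X⟧} (hf : constantCoeff f = 0) :
    HasLogDeriv (expPS f) (X * d⁄dX ℚ f) := by
  rw [HasLogDeriv, expPS_eq_subst_exp hf, derivative_subst (HasSubst.of_constantCoeff_zero' hf),
    derivative_exp]
  ring

theorem constantCoeff_serA (a : ℕ → ℚ) : constantCoeff (serA a) = 0 := by
  simp [serA]

theorem coeff_X_mul_derivative_serA (a : ℕ → ℚ) (n : ℕ) :
    coeff n (X * d⁄dX ℚ (serA a)) = if n = 0 then 0 else a n := by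
  rw [coeff_X_mul_derivative, serA, coeff_mk]
  split_ifs with hn
  · simp
  · field_simp

section Factorization

variable (p r : ℕ)

/-- The exponent of `1 - X^(p^n)` in the factorization, the prefactor `(1 - X)^(p^(r-1))`
counting as the factor `n = 0`. -/
def factorExp (n : ℕ) : ℕ := if n = 0 then p ^ (r - 1) else p ^ (n * (r - 2)) * (p ^ (r - 1) - 1)

noncomputable def productFactor (n : ℕ) : ℚ⟦X⟧ :=
  if n = 0 then 1 else (1 - X ^ (p ^ n)) ^ (p ^ (n * (r - 2)) * (p ^ (r - 1) - 1))

variable {p r}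

theorem sum_factorExp_mul_pow (hp : 0 < p) (hr : 2 ≤ r) (k : ℕ) :
    ∑ n ∈ Finset.range (k + 1), factorExp p r n * p ^ n = p ^ ((k + 1) * (r - 1)) := by
  obtain ⟨s, rfl⟩ := Nat.exists_eq_add_of_le' hr
  obtain ⟨t, ht⟩ := Nat.exists_eq_add_of_le' (Nat.one_le_pow (s + 1) p hp)
  rw [show s + 2 - 1 = s + 1 from rfl]
  induction k with
  | zero => simp [factorExp]
  | succ k ih =>
    rw [Finset.sum_range_succ, ih, factorExp, if_neg k.succ_ne_zero,
      show s + 2 - 1 = s + 1 from rfl, show s + 2 - 2 = s from rfl, ht, Nat.add_sub_cancel]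
    calc p ^ ((k + 1) * (s + 1)) + p ^ ((k + 1) * s) * t * p ^ (k + 1)
        = p ^ ((k + 1) * (s + 1)) * (t + 1) := by ring
      _ = p ^ ((k + 1 + 1) * (s + 1)) := by rw [← ht]; ring

theorem filter_pow_dvd_eq_range (hp : p.Prime) {a M : ℕ} (ha : a ≠ 0) (haM : a ≤ M) :
    (Finset.range (M + 1)).filter (p ^ · ∣ a) = Finset.range (padicValNat p a + 1) := by
  have : Fact p.Prime := ⟨hp⟩
  have hv : padicValNat p a < M + 1 :=
    calc padicValNat p a < p ^ padicValNat p a := Nat.lt_pow_self hp.one_lt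
      _ ≤ a := Nat.le_of_dvd (Nat.pos_of_ne_zero ha) pow_padicValNat_dvd
      _ < M + 1 := Nat.lt_succ_of_le haM
  ext n
  simp only [Finset.mem_filter, Finset.mem_range, padicValNat_dvd_iff_le ha]
  omega

theorem X_pow_dvd_productFactor_sub_one (hp : 1 < p) (n : ℕ) :
    X ^ n ∣ productFactor p r n - 1 := by
  rw [productFactor]
  split_ifs with hn
  · simp
  · exact (pow_dvd_pow X (Nat.lt_pow_self hp).le).trans (X_pow_dvd_one_sub_X_pow_pow_sub_one _ _)

theorem one_sub_X_pow_mul_prod_productFactor (M : ℕ) :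
    (1 - X) ^ (p ^ (r - 1)) * ∏ n ∈ Finset.range (M + 1), productFactor p r n =
      ∏ n ∈ Finset.range (M + 1), (1 - X ^ (p ^ n)) ^ factorExp p r n := by
  rw [Finset.prod_range_succ', Finset.prod_range_succ' (fun n => (1 - X ^ (p ^ n)) ^ _)]
  simp [productFactor, factorExp, mul_comm]

theorem hasLogDeriv_prod_one_sub_X_pow_pow (hp : p ≠ 0) (M : ℕ) :
    HasLogDeriv (∏ n ∈ Finset.range (M + 1), (1 - X ^ (p ^ n) : ℚ⟦X⟧) ^ factorExp p r n)
      (∑ n ∈ Finset.range (M + 1), -((factorExp p r n * p ^ n) • geomTail (p ^ n))) :=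
  HasLogDeriv.prod fun n _ => hasLogDeriv_one_sub_X_pow_pow (pow_ne_zero n hp) _

theorem coeff_sum_factorExp_smul_geomTail (hp : p.Prime) (hr : 2 ≤ r) {a M : ℕ} (ha : a ≠ 0)
    (haM : a ≤ M) :
    coeff a (∑ n ∈ Finset.range (M + 1),
        -((factorExp p r n * p ^ n) • geomTail (p ^ n) : ℚ⟦X⟧)) =
      -(p : ℚ) ^ ((1 + padicValNat p a) * (r - 1)) := by
  simp only [map_sum, map_neg, map_nsmul, coeff_geomTail, ne_eq, ha, not_false_eq_true, and_true,
    smul_ite, smul_zero, nsmul_one]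
  rw [Finset.sum_neg_distrib, ← Finset.sum_filter, filter_pow_dvd_eq_range hp ha haM,
    ← Nat.cast_sum, sum_factorExp_mul_pow hp.pos hr, add_comm 1, Nat.cast_pow]

theorem hasLogDeriv_one_sub_X_pow_mul_prodPS (hp : p.Prime) (hr : 2 ≤ r) :
    HasLogDeriv ((1 - X) ^ (p ^ (r - 1)) * prodPS (productFactor p r))
      (X * d⁄dX ℚ (serA fun n => -((p : ℚ) ^ ((1 + padicValNat p n) * (r - 1))))) := by
  refine HasLogDeriv.of_forall_X_pow_dvd fun M =>
    ⟨_, _, hasLogDeriv_prod_one_sub_X_pow_pow (r := r) hp.ne_zero M, ?_, ?_⟩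
  · rw [← one_sub_X_pow_mul_prod_productFactor, ← mul_sub]
    exact dvd_mul_of_dvd_right
      (X_pow_dvd_prodPS_sub_prod_range (X_pow_dvd_productFactor_sub_one hp.one_lt) M) _
  · rw [X_pow_dvd_iff]
    intro a ha
    rw [map_sub, sub_eq_zero, coeff_X_mul_derivative_serA]
    split_ifs with ha0
    · simp [ha0]
    · rw [coeff_sum_factorExp_smul_geomTail hp hr ha0 (Nat.le_of_lt_succ ha)]

end Factorization

/-- `G_r^p(x) = (1-x)^(p^(r-1)) ∏_{n ≥ 1} (1 - x^(p^n))^(p^(n(r-2)) (p^(r-1) - 1))`. -/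
theorem stmt_16 (p : ℕ) (hp : p.Prime) (r : ℕ) (hr : 2 ≤ r) :
    Gser p r = ((1 : PowerSeries ℚ) - PowerSeries.X) ^ (p ^ (r - 1)) *
      prodPS (fun n => if n = 0 then 1 else
        ((1 : PowerSeries ℚ) - PowerSeries.X ^ (p ^ n)) ^
          (p ^ (n * (r - 2)) * (p ^ (r - 1) - 1))) := by
  refine (hasLogDeriv_expPS (constantCoeff_serA _)).eq_of_constantCoeff_eq (by simp)
    (hasLogDeriv_one_sub_X_pow_mul_prodPS hp hr) ?_
  rw [Gser, constantCoeff_expPS, map_mul, constantCoeff_prodPS]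
  simp
end
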